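/- arXiv:2005.12122 — 2 statements merged into one kernel-verified Lean document; each statement's English description precedes it below -/
import Mathlib

section
/- Let G be a connected graph and P, P', Q, Q' robust profiles in G. Suppose (A,B) distinguishes P and P' efficiently, (C,D) distinguishes Q and Q' efficiently, and |(A,B)| = |(C,D)|. Then either there is a pair of opposite corner separations of (A,B) and (C,D) with one element efficiently distinguishing P and P' and the other efficiently distinguishing Q and Q', or else there are two pairs of opposite corner separations of (A,B) and (C,D), the first with both elements efficiently distinguishing P and P' and the second with both elements efficiently distinguishing Q and Q'. -/
/-- A separation of a graph `G`: a pair of vertex sets covering `V` with no edge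
between `A ∖ B` and `B ∖ A`. -/
structure GraphSep {V : Type} (G : SimpleGraph V) where
  A : Set V
  B : Set V
  union_eq : A ∪ B = Set.univ
  no_edge : ∀ a ∈ A \ B, ∀ b ∈ B \ A, ¬ G.Adj a b

namespace GraphSep

variable {V V' : Type} {G : SimpleGraph V} {G' : SimpleGraph V'}

/-- The inverse `(B,A)` of a separation `(A,B)`. -/
def inv (s : GraphSep G) : GraphSep G where
  A := s.B
  B := s.A
  union_eq := by rw [Set.union_comm]; exact s.union_eq
  no_edge := fun a ha b hb h => s.no_edge b hb a ha h.symm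

/-- The separator `A ∩ B`. -/
def sepSet (s : GraphSep G) : Set V := s.A ∩ s.B

/-- The order `|A ∩ B|` of a separation, as an extended natural number. -/
noncomputable def order (s : GraphSep G) : ℕ∞ := (s.A ∩ s.B).encard

/-- `(A,B) ≤ (C,D)` iff `A ⊆ C` and `D ⊆ B`. -/
protected def le (s t : GraphSep G) : Prop := s.A ⊆ t.A ∧ t.B ⊆ s.B

/-- Two separations are nested if after possibly replacing either by its inverse
they are `≤`-comparable. -/
def Nested (s t : GraphSep G) : Prop :=
  s.le t ∨ s.le t.inv ∨ s.inv.le t ∨ s.inv.le t.inv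

lemma mem_A_or_B (s : GraphSep G) (x : V) : x ∈ s.A ∨ x ∈ s.B := by
  have h : x ∈ s.A ∪ s.B := by rw [s.union_eq]; exact Set.mem_univ x
  exact (Set.mem_union _ _ _).1 h

/-- The join `(A,B) ∨ (C,D) = (A ∪ C, B ∩ D)`. -/
def join (s t : GraphSep G) : GraphSep G where
  A := s.A ∪ t.A
  B := s.B ∩ t.B
  union_eq := by
    apply Set.eq_univ_of_forall
    intro x
    rcases s.mem_A_or_B x with h1 | h1
    · exact Or.inl (Or.inl h1)
    · rcases t.mem_A_or_B x with h2 | h2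
      · exact Or.inl (Or.inr h2)
      · exact Or.inr ⟨h1, h2⟩
  no_edge := by
    rintro a ⟨haA, haB⟩ b ⟨hbB, hbA⟩ hadj
    by_cases hsB : a ∈ s.B
    · have hatB : a ∉ t.B := fun h => haB ⟨hsB, h⟩
      have hatA : a ∈ t.A := (t.mem_A_or_B a).resolve_right hatB
      exact t.no_edge a ⟨hatA, hatB⟩ b ⟨hbB.2, fun h => hbA (Or.inr h)⟩ hadj
    · have hasA : a ∈ s.A := (s.mem_A_or_B a).resolve_right hsB
      exact s.no_edge a ⟨hasA, hsB⟩ b ⟨hbB.1, fun h => hbA (Or.inl h)⟩ hadj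

/-- The image of a separation under a graph isomorphism. -/
def map (φ : G ≃g G') (s : GraphSep G) : GraphSep G' where
  A := ⇑φ '' s.A
  B := ⇑φ '' s.B
  union_eq := by
    apply Set.eq_univ_of_forall
    intro y
    rcases s.mem_A_or_B (φ.symm y) with h | h
    · exact Or.inl ⟨φ.symm y, h, φ.apply_symm_apply y⟩
    · exact Or.inr ⟨φ.symm y, h, φ.apply_symm_apply y⟩
  no_edge := by
    rintro a ⟨⟨x, hxA, rfl⟩, haB⟩ b ⟨⟨y, hyB, rfl⟩, hbA⟩ hadj
    exact s.no_edge x ⟨hxA, fun h => haB ⟨x, h, rfl⟩⟩ y ⟨hyB, fun h => hbA ⟨y, h, rfl⟩⟩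
      (φ.map_adj_iff.mp hadj)

/-- The neighbourhood of a set of vertices. -/
def nbhd (G : SimpleGraph V) (X : Set V) : Set V := {v | v ∉ X ∧ ∃ x ∈ X, G.Adj v x}

/-- `w` can be reached from `v` by a walk avoiding `X`. -/
def AvoidReach (G : SimpleGraph V) (X : Set V) (v w : V) : Prop :=
  ∃ p : G.Walk v w, ∀ u ∈ p.support, u ∉ X

/-- `C` is a (connected) component of `G − X`. -/
def IsCompOf (G : SimpleGraph V) (X C : Set V) : Prop :=
  ∃ v, v ∉ X ∧ C = {w | AvoidReach G X v w}

/-- A separation `(A,B)` is tight if each of `A ∖ B` and `B ∖ A` contains a component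
of `G − (A ∩ B)` whose neighbourhood is all of `A ∩ B`. -/
def IsTight (s : GraphSep G) : Prop :=
  (∃ C, IsCompOf G s.sepSet C ∧ nbhd G C = s.sepSet ∧ C ⊆ s.A \ s.B) ∧
  (∃ C, IsCompOf G s.sepSet C ∧ nbhd G C = s.sepSet ∧ C ⊆ s.B \ s.A)

/-- An orientation of `S_k`: it contains only separations of order `< k`, contains
at least one of `s, s⁻¹` for every separation of order `< k`, and contains both only
if they coincide. -/
def IsOrientation (k : ℕ∞) (P : Set (GraphSep G)) : Prop :=
  (∀ s ∈ P, s.order < k) ∧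
  (∀ s : GraphSep G, s.order < k → (s ∈ P ∨ s.inv ∈ P)) ∧
  (∀ s ∈ P, s.inv ∈ P → s.inv = s)

/-- Consistency: no two members `r, s` with distinct underlying separations satisfy
`r⁻¹ ≤ s`. -/
def Consistent (P : Set (GraphSep G)) : Prop :=
  ∀ r ∈ P, ∀ s ∈ P, r.inv.le s → r = s ∨ r = s.inv

/-- A `k`-profile: a consistent orientation of `S_k` satisfying the profile property. -/
def IsProfile (k : ℕ∞) (P : Set (GraphSep G)) : Prop :=
  IsOrientation k P ∧ Consistent P ∧ ∀ s ∈ P, ∀ t ∈ P, (s.join t).inv ∉ P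

/-- A profile in `G` is a `k`-profile for some `k ∈ ℕ ∪ {ℵ₀}`. -/
def IsProfileIn (G : SimpleGraph V) (P : Set (GraphSep G)) : Prop := ∃ k : ℕ∞, IsProfile k P

/-- A profile is regular if it contains no separation of the form `(V, X)`. -/
def RegularP (P : Set (GraphSep G)) : Prop := ∀ s ∈ P, s.A ≠ Set.univ

/-- A profile is bounded if it is a `k`-profile for some finite `k` and is not a subset
of any `ℵ₀`-profile. -/
def BoundedP (P : Set (GraphSep G)) : Prop :=
  (∃ k : ℕ, IsProfile (k : ℕ∞) P) ∧ ∀ Q : Set (GraphSep G), IsProfile ⊤ Q → ¬ P ⊆ Q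

/-- `s` distinguishes the profiles `P` and `P'`. -/
def Distinguishes (s : GraphSep G) (P P' : Set (GraphSep G)) : Prop :=
  (s ∈ P ∧ s.inv ∈ P') ∨ (s.inv ∈ P ∧ s ∈ P')

/-- `s` distinguishes `P` and `P'` efficiently: it has minimum order among all
separations distinguishing `P` and `P'`. -/
def EffDist (s : GraphSep G) (P P' : Set (GraphSep G)) : Prop :=
  Distinguishes s P P' ∧ ∀ t : GraphSep G, Distinguishes t P P' → s.order ≤ t.order

/-- `P` and `P'` are distinguishable: some finite-order separation distinguishes them. -/
def Distinguishable (P P' : Set (GraphSep G)) : Prop :=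
  ∃ s : GraphSep G, s.order < ⊤ ∧ Distinguishes s P P'

/-- Robustness of a profile. -/
def RobustP (P : Set (GraphSep G)) : Prop :=
  ∀ s ∈ P, ∀ t : GraphSep G, t.order < ⊤ →
    (s.join t).order < s.order → (s.join t.inv).order < s.order →
    (s.join t ∈ P ∨ s.join t.inv ∈ P)

/-- A `k`-profile is principal if for every vertex set `X` with `|X| < k` it contains
`(V ∖ C, C ∪ X)` for some component `C` of `G − X`. -/
def PrincipalP (k : ℕ∞) (P : Set (GraphSep G)) : Prop :=
  ∀ X : Set V, X.encard < k →
    ∃ C, IsCompOf G X C ∧ ∃ s ∈ P, s.A = Cᶜ ∧ s.B = C ∪ X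

/-- `c` is a corner separation of `s` and `t`. -/
def IsCornerSep (s t c : GraphSep G) : Prop :=
  ∃ s' ∈ ({s, s.inv} : Set (GraphSep G)), ∃ t' ∈ ({t, t.inv} : Set (GraphSep G)),
    c = s'.join t' ∨ c = (s'.join t').inv

/-- The set `S ⊆ V ∖ {x,y}` separates `x` from `y` in `G`. -/
def SeparatesIn (G : SimpleGraph V) (x y : V) (S : Set V) : Prop :=
  x ∉ S ∧ y ∉ S ∧ ∀ p : G.Walk x y, ∃ u ∈ p.support, u ∈ S

/-- `S` is a `⊆`-minimal `x`–`y`-separator in `G`. -/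
def MinSeparator (G : SimpleGraph V) (x y : V) (S : Set V) : Prop :=
  SeparatesIn G x y S ∧ ∀ S' ⊆ S, SeparatesIn G x y S' → S' = S

/-- The separation of `G` induced by an (oriented) edge of a tree-decomposition. -/
def InducedSep {ι : Type} (T : SimpleGraph ι) (𝒱 : ι → Set V) (x : GraphSep G) : Prop :=
  ∃ t t' : ι, T.Adj t t' ∧
    x.A = (⋃ u ∈ {u : ι | ∃ p : T.Walk u t, s(t, t') ∉ p.edges}, 𝒱 u) ∧
    x.B = (⋃ u ∈ {u : ι | ∃ p : T.Walk u t', s(t, t') ∉ p.edges}, 𝒱 u)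

/-- Opposite pairs of corner separations of `s` and `t`. -/
def OppPair (s t c d : GraphSep G) : Prop :=
  (c = s.join t ∧ d = s.inv.join t.inv) ∨ (c = s.inv.join t.inv ∧ d = s.join t) ∨
  (c = s.join t.inv ∧ d = s.inv.join t) ∨ (c = s.inv.join t ∧ d = s.join t.inv)

end GraphSep

/-!
Orient `s` from `P` to `P'` and `t` from `Q` to `Q'`, and let `k = |s| = |t|`. If `y ∈ P`, the
profile property and consistency show that `s ∨ y` again points from `P` to `P'`; hence it has
order at least `k`, and if its order is `k` it distinguishes `P` and `P'` efficiently. Orienting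
`t` in `P` and in `P'`, and `s` in `Q` and in `Q'`, this yields four candidate corners. Opposite
corners have orders summing to at most `2k` by submodularity, so two opposite candidates both
have order exactly `k`. Inspecting the positions of the four candidates, either a `P`-side
candidate is opposite a `Q`-side one, or the two `P`-side candidates are opposite and so are
the two `Q`-side ones.
-/

lemma ENat.le_of_le_of_add_le {k a b : ℕ∞} (hk : k ≠ ⊤) (hb : k ≤ b) (hab : a + b ≤ k + k) :
    a ≤ k :=
  (WithTop.add_le_add_iff_right hk).mp ((add_le_add_right hb a).trans hab)

namespace GraphSep

variable {V : Type} {G : SimpleGraph V}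

@[ext] lemma ext {s t : GraphSep G} (hA : s.A = t.A) (hB : s.B = t.B) : s = t := by
  cases s; cases t; simp_all

@[simp] lemma inv_inv (s : GraphSep G) : s.inv.inv = s := rfl

@[simp] lemma order_inv (s : GraphSep G) : s.inv.order = s.order := by
  simp only [order, inv, Set.inter_comm]

lemma join_comm (s t : GraphSep G) : s.join t = t.join s :=
  ext (Set.union_comm _ _) (Set.inter_comm _ _)

lemma le_join (s t : GraphSep G) : s.le (s.join t) :=
  ⟨Set.subset_union_left, Set.inter_subset_left⟩

/-- The separators of two opposite corners together lie in `(A ∩ B) ∪ (C ∩ D)` and meet only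
inside `(A ∩ B) ∩ (C ∩ D)`. -/
lemma order_join_add_order_inv_join_inv_le (s t : GraphSep G) :
    (s.join t).order + (s.inv.join t.inv).order ≤ s.order + t.order := by
  show ((s.A ∪ t.A) ∩ (s.B ∩ t.B)).encard + ((s.B ∪ t.B) ∩ (s.A ∩ t.A)).encard
      ≤ (s.A ∩ s.B).encard + (t.A ∩ t.B).encard
  rw [← Set.encard_union_add_encard_inter, ← Set.encard_union_add_encard_inter (s.A ∩ s.B)]
  refine add_le_add (Set.encard_mono ?_) (Set.encard_mono ?_)
  · rintro x (⟨hA | hA, hsB, htB⟩ | ⟨hB | hB, hsA, htA⟩)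
    exacts [.inl ⟨hA, hsB⟩, .inr ⟨hA, htB⟩, .inl ⟨hsA, hB⟩, .inr ⟨htA, hB⟩]
  · rintro x ⟨⟨-, hsB, htB⟩, -, hsA, htA⟩
    exact ⟨⟨hsA, hsB⟩, htA, htB⟩

def orient (s : GraphSep G) : Bool → GraphSep G
  | true => s
  | false => s.inv

@[simp] lemma orient_inv (s : GraphSep G) (a : Bool) : (s.orient a).inv = s.orient !a := by
  cases a <;> rfl

@[simp] lemma order_orient (s : GraphSep G) (a : Bool) : (s.orient a).order = s.order := by
  cases a <;> simp [orient]

def corner (s t : GraphSep G) (a b : Bool) : GraphSep G := (s.orient a).join (t.orient b)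

lemma corner_comm (s t : GraphSep G) (a b : Bool) : corner s t a b = corner t s b a :=
  join_comm _ _

lemma oppPair_corner (s t : GraphSep G) {a b a' b' : Bool} (ha : a' = !a) (hb : b' = !b) :
    OppPair s t (corner s t a b) (corner s t a' b') := by
  subst ha hb
  cases a <;> cases b <;> simp [OppPair, corner, orient]

lemma order_corner_add_order_corner_le (s t : GraphSep G) {a b a' b' : Bool}
    (ha : a' = !a) (hb : b' = !b) :
    (corner s t a b).order + (corner s t a' b').order ≤ s.order + t.order := by
  subst ha hb
  have h := order_join_add_order_inv_join_inv_le (s.orient a) (t.orient b)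
  rwa [orient_inv, orient_inv, order_orient, order_orient] at h

section Profiles

variable {R R' : Set (GraphSep G)} {s x y : GraphSep G}

lemma Distinguishes.symm (h : Distinguishes s R R') : Distinguishes s R' R :=
  h.elim (fun h => .inr h.symm) (fun h => .inl h.symm)

lemma Distinguishes.inv (h : Distinguishes s R R') : Distinguishes s.inv R R' :=
  h.elim .inr .inl

lemma Distinguishes.exists_orient (h : Distinguishes s R R') :
    ∃ a, s.orient a ∈ R ∧ s.orient (!a) ∈ R' :=
  h.elim (fun h => ⟨true, h⟩) (fun h => ⟨false, h⟩)

lemma EffDist.symm (h : EffDist s R R') : EffDist s R' R :=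
  ⟨h.1.symm, fun v hv => h.2 v hv.symm⟩

lemma EffDist.orient (h : EffDist s R R') (a : Bool) : EffDist (s.orient a) R R' := by
  cases a
  · exact ⟨h.1.inv, fun v hv => (order_inv s).trans_le (h.2 v hv)⟩
  · exact h

lemma IsProfile.exists_orient_mem {k : ℕ∞} (hR : IsProfile k R) (hs : s.order < k) :
    ∃ b, s.orient b ∈ R :=
  (hR.1.2.1 s hs).elim (fun h => ⟨true, h⟩) (fun h => ⟨false, h⟩)

/-- The profile property puts `x ∨ y` into `R`; consistency with `x⁻¹ ∈ R'` puts its inverse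
into `R'`. -/
lemma distinguishes_join {kR kR' : ℕ∞} (hR : IsProfile kR R) (hR' : IsProfile kR' R')
    (hx : x ∈ R) (hx' : x.inv ∈ R') (hy : y ∈ R) (hxy : (x.join y).order ≤ x.order) :
    Distinguishes (x.join y) R R' := by
  have hxyR : x.join y ∈ R :=
    (hR.1.2.1 _ (hxy.trans_lt (hR.1.1 x hx))).resolve_right (hR.2.2 x hx y hy)
  refine .inl ⟨hxyR, ?_⟩
  rcases hR'.1.2.1 _ (hxy.trans_lt (order_inv x ▸ hR'.1.1 x.inv hx')) with hxyR' | hxyR'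
  · rcases hR'.2.1 x.inv hx' _ hxyR' (le_join x y) with h | h
    · have hx_inv : x.inv = x := hR.1.2.2 x hx (h ▸ hxyR)
      rwa [← h, inv_inv, ← hx_inv]
    · exact h ▸ hx'
  · exact hxyR'

def IsEffDistCandidate (k : ℕ∞) (c : GraphSep G) (R R' : Set (GraphSep G)) : Prop :=
  k ≤ c.order ∧ (c.order ≤ k → EffDist c R R')

lemma IsEffDistCandidate.symm {k : ℕ∞} {c : GraphSep G} (h : IsEffDistCandidate k c R R') :
    IsEffDistCandidate k c R' R :=
  ⟨h.1, fun hc => (h.2 hc).symm⟩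

lemma EffDist.isEffDistCandidate_join {kR kR' : ℕ∞} (hR : IsProfile kR R)
    (hR' : IsProfile kR' R') (hx : EffDist x R R') (hxR : x ∈ R) (hxR' : x.inv ∈ R')
    (hy : y ∈ R) : IsEffDistCandidate x.order (x.join y) R R' := by
  refine ⟨?_, fun hxy => ⟨distinguishes_join hR hR' hxR hxR' hy hxy,
    fun v hv => hxy.trans (hx.2 v hv)⟩⟩
  by_contra! hlt
  exact (hx.2 _ (distinguishes_join hR hR' hxR hxR' hy hlt.le)).not_gt hlt

lemma EffDist.exists_isEffDistCandidate_corner {kR kR' : ℕ∞} (hR : IsProfile kR R)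
    (hR' : IsProfile kR' R') (hs : EffDist s R R') {a : Bool} (hsR : s.orient a ∈ R)
    (hsR' : s.orient (!a) ∈ R') (t : GraphSep G) (ht : t.order = s.order) :
    ∃ b, IsEffDistCandidate s.order (corner s t a b) R R' := by
  obtain ⟨b, hb⟩ := hR.exists_orient_mem (s := t) (by simpa [ht] using hR.1.1 _ hsR)
  have h := (hs.orient a).isEffDistCandidate_join hR hR' hsR (by rwa [orient_inv]) hb
  rw [order_orient] at h
  exact ⟨b, h⟩

lemma IsEffDistCandidate.effDist_and_effDist {S S' : Set (GraphSep G)} {k : ℕ∞} {c d : GraphSep G}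
    (hk : k ≠ ⊤) (hcd : c.order + d.order ≤ k + k) (hc : IsEffDistCandidate k c R R')
    (hd : IsEffDistCandidate k d S S') : EffDist c R R' ∧ EffDist d S S' :=
  ⟨hc.2 (ENat.le_of_le_of_add_le hk hd.1 hcd),
    hd.2 (ENat.le_of_le_of_add_le hk hc.1 (add_comm c.order d.order ▸ hcd))⟩

end Profiles

/-- Read `(a, β)`, `(a', β')`, `(α, b)`, `(α', b')` as the positions `(x, y)` of the corners
`corner s t x y` that are candidates for `P`, `P'`, `Q`, `Q'`; two positions are opposite iff
both coordinates differ. Either both `P`-side and both `Q`-side candidates are opposite, or a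
`P`-side candidate is opposite to a `Q`-side one. -/
lemma corner_positions_cases (a a' b b' α α' β β' : Bool) (ha : a' = !a) (hb : b' = !b) :
    (β' = !β ∧ α' = !α) ∨ (α = !a ∧ b = !β) ∨ (α' = !a ∧ b' = !β) ∨
      (α = !a' ∧ b = !β') ∨ (α' = !a' ∧ b' = !β') := by
  subst ha hb
  revert a b α α' β β'
  decide

theorem exists_oppPair_effDist {P P' Q Q' : Set (GraphSep G)} {kP kP' kQ kQ' : ℕ∞}
    (hP : IsProfile kP P) (hP' : IsProfile kP' P') (hQ : IsProfile kQ Q)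
    (hQ' : IsProfile kQ' Q') {s t : GraphSep G} (hs : EffDist s P P') (ht : EffDist t Q Q')
    (heq : s.order = t.order) :
    (∃ c d : GraphSep G, OppPair s t c d ∧ EffDist c P P' ∧ EffDist d Q Q') ∨
    (∃ c₁ d₁ c₂ d₂ : GraphSep G, OppPair s t c₁ d₁ ∧ OppPair s t c₂ d₂ ∧
      EffDist c₁ P P' ∧ EffDist d₁ P P' ∧ EffDist c₂ Q Q' ∧ EffDist d₂ Q Q') := by
  obtain ⟨a, hsP, hsP'⟩ := hs.1.exists_orient
  obtain ⟨b, htQ, htQ'⟩ := ht.1.exists_orient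
  obtain ⟨β, cP⟩ := hs.exists_isEffDistCandidate_corner hP hP' hsP hsP' t heq.symm
  obtain ⟨β', cP'⟩ := hs.symm.exists_isEffDistCandidate_corner hP' hP hsP'
    (by rwa [Bool.not_not]) t heq.symm
  obtain ⟨α, cQ⟩ := ht.exists_isEffDistCandidate_corner hQ hQ' htQ htQ' s heq
  obtain ⟨α', cQ'⟩ := ht.symm.exists_isEffDistCandidate_corner hQ' hQ htQ'
    (by rwa [Bool.not_not]) s heq
  rw [corner_comm, ← heq] at cQ cQ'
  have hk : s.order ≠ ⊤ := by simpa using (hP.1.1 _ hsP).ne_top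
  have pin {a b a' b' : Bool} {R R' S S' : Set (GraphSep G)} (ha : a' = !a) (hb : b' = !b)
      (hc : IsEffDistCandidate s.order (corner s t a b) R R')
      (hd : IsEffDistCandidate s.order (corner s t a' b') S S') :
      EffDist (corner s t a b) R R' ∧ EffDist (corner s t a' b') S S' :=
    hc.effDist_and_effDist hk
      ((order_corner_add_order_corner_le s t ha hb).trans_eq (by rw [heq])) hd
  have split {a b a' b' : Bool} (ha : a' = !a) (hb : b' = !b)
      (hc : IsEffDistCandidate s.order (corner s t a b) P P')
      (hd : IsEffDistCandidate s.order (corner s t a' b') Q Q') :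
      ∃ c d : GraphSep G, OppPair s t c d ∧ EffDist c P P' ∧ EffDist d Q Q' :=
    ⟨_, _, oppPair_corner s t ha hb, pin ha hb hc hd⟩
  rcases corner_positions_cases a (!a) b (!b) α α' β β' rfl rfl with
    ⟨hβ, hα⟩ | ⟨hα, hb⟩ | ⟨hα, hb⟩ | ⟨hα, hb⟩ | ⟨hα, hb⟩
  · obtain ⟨hc₁, hd₁⟩ := pin rfl hβ cP cP'.symm
    obtain ⟨hc₂, hd₂⟩ := pin hα rfl cQ cQ'.symm
    exact .inr ⟨_, _, _, _, oppPair_corner s t rfl hβ, oppPair_corner s t hα rfl,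
      hc₁, hd₁, hc₂, hd₂⟩
  · exact .inl (split hα hb cP cQ)
  · exact .inl (split hα hb cP cQ'.symm)
  · exact .inl (split hα hb cP'.symm cQ)
  · exact .inl (split hα hb cP'.symm cQ'.symm)

end GraphSep

open GraphSep in
theorem stmt12_general {V : Type} (G : SimpleGraph V)
    (P P' Q Q' : Set (GraphSep G))
    (hP : IsProfileIn G P) (hP' : IsProfileIn G P')
    (hQ : IsProfileIn G Q) (hQ' : IsProfileIn G Q')
    (s t : GraphSep G)
    (hs : EffDist s P P') (ht : EffDist t Q Q')
    (heq : s.order = t.order) :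
    (∃ c d : GraphSep G, OppPair s t c d ∧ EffDist c P P' ∧ EffDist d Q Q') ∨
    (∃ c₁ d₁ c₂ d₂ : GraphSep G, OppPair s t c₁ d₁ ∧ OppPair s t c₂ d₂ ∧
      EffDist c₁ P P' ∧ EffDist d₁ P P' ∧ EffDist c₂ Q Q' ∧ EffDist d₂ Q Q') := by
  obtain ⟨kP, hP⟩ := hP
  obtain ⟨kP', hP'⟩ := hP'
  obtain ⟨kQ, hQ⟩ := hQ
  obtain ⟨kQ', hQ'⟩ := hQ'
  exact exists_oppPair_effDist hP hP' hQ hQ' hs ht heq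

open GraphSep in
/-- for efficient distinguishers of equal order, either an opposite pair
of corner separations splits between the two sets of efficient distinguishers, or both
opposite pairs occur, one within each. -/
theorem stmt12 {V : Type} (G : SimpleGraph V) (hG : G.Connected)
    (P P' Q Q' : Set (GraphSep G))
    (hP : IsProfileIn G P) (hP' : IsProfileIn G P')
    (hQ : IsProfileIn G Q) (hQ' : IsProfileIn G Q')
    (hPr : RobustP P) (hP'r : RobustP P') (hQr : RobustP Q) (hQ'r : RobustP Q')
    (s t : GraphSep G)
    (hs : EffDist s P P') (ht : EffDist t Q Q')
    (heq : s.order = t.order) :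
    (∃ c d : GraphSep G, OppPair s t c d ∧ EffDist c P P' ∧ EffDist d Q Q') ∨
    (∃ c₁ d₁ c₂ d₂ : GraphSep G, OppPair s t c₁ d₁ ∧ OppPair s t c₂ d₂ ∧
      EffDist c₁ P P' ∧ EffDist d₁ P P' ∧ EffDist c₂ Q Q' ∧ EffDist d₂ Q Q') :=
  stmt12_general G P P' Q Q' hP hP' hQ hQ' s t hs ht heq
end

section
/- Let G be a locally finite connected graph and (A,B) a separation of finite order that distinguishes some two regular profiles in G efficiently. Then G has only finitely many tight separations of order at most |(A,B)| that cross (A,B). -/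
/-!
If a tight separation `t` crosses `s`, its separator meets a fixed walk between two vertices of
the finite separator `X` of `s`: otherwise `X` misses the separator and one side of `t`, and that
side, connected through its tight component, lies on one side of `s`, so `t` and `s` are nested.
Hence all separators in question meet a fixed finite set. In a locally finite graph only finitely
many sets `Y` with `|Y| ≤ n` containing a vertex `f` are the neighbourhood of two disjoint
components of `G - Y`: these contain neighbours `x, x'` of `f`, and for `F ⊆ Y` either `Y = F` or
`Y` meets a fixed `F`-avoiding `x`–`x'` walk in a new vertex, so induction on `n - |F|` applies.
Finally, a separation is determined by its separator `Y` and the components of `G - Y` inside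
its `A`, of which there are finitely many.
-/

namespace GraphSep

variable {V : Type} {G : SimpleGraph V}

section AvoidReach

variable {X Y : Set V} {u v w : V}

lemma AvoidReach.refl (hv : v ∉ X) : AvoidReach G X v v :=
  ⟨.nil, by simpa using hv⟩

lemma AvoidReach.notMem_right (h : AvoidReach G X v w) : w ∉ X := by
  obtain ⟨p, hp⟩ := h
  exact hp w p.end_mem_support

lemma AvoidReach.symm (h : AvoidReach G X v w) : AvoidReach G X w v := by
  obtain ⟨p, hp⟩ := h
  exact ⟨p.reverse, fun u hu => hp u (by simpa using hu)⟩

lemma AvoidReach.trans (h₁ : AvoidReach G X u v) (h₂ : AvoidReach G X v w) :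
    AvoidReach G X u w := by
  obtain ⟨p, hp⟩ := h₁
  obtain ⟨q, hq⟩ := h₂
  refine ⟨p.append q, fun x hx => ?_⟩
  rcases p.mem_support_append_iff q |>.mp hx with hx | hx
  exacts [hp x hx, hq x hx]

lemma AvoidReach.adj (h : AvoidReach G X u v) (hvw : G.Adj v w) (hw : w ∉ X) :
    AvoidReach G X u w := by
  obtain ⟨p, hp⟩ := h
  refine ⟨p.concat hvw, fun x hx => ?_⟩
  rw [SimpleGraph.Walk.support_concat, List.mem_append, List.mem_singleton] at hx
  rcases hx with hx | rfl
  exacts [hp x hx, hw]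

lemma AvoidReach.mono (hYX : Y ⊆ X) (h : AvoidReach G X v w) : AvoidReach G Y v w := by
  obtain ⟨p, hp⟩ := h
  exact ⟨p, fun u hu huY => hp u hu (hYX huY)⟩

lemma isCompOf_setOf (hv : v ∉ X) : IsCompOf G X {w | AvoidReach G X v w} :=
  ⟨v, hv, rfl⟩

lemma IsCompOf.eq_setOf {C : Set V} (hC : IsCompOf G X C) (hv : v ∈ C) :
    C = {w | AvoidReach G X v w} := by
  obtain ⟨c, -, rfl⟩ := hC
  ext w
  exact ⟨hv.symm.trans, hv.trans⟩

lemma IsCompOf.mem_of_avoidReach {C : Set V} (hC : IsCompOf G X C) (hv : v ∈ C)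
    (h : AvoidReach G X v w) : w ∈ C :=
  hC.eq_setOf hv ▸ h

lemma IsCompOf.nonempty {C : Set V} (hC : IsCompOf G X C) : C.Nonempty := by
  obtain ⟨c, hc, rfl⟩ := hC
  exact ⟨c, .refl hc⟩

lemma IsCompOf.avoidReach {C : Set V} (hC : IsCompOf G X C) (hv : v ∈ C) (hw : w ∈ C) :
    AvoidReach G X v w :=
  (hC.eq_setOf hv ▸ hw :)

lemma exists_adj_of_avoidReach (hG : G.Connected) (hv : v ∉ X) (hX : X.Nonempty) :
    ∃ c, AvoidReach G X v c ∧ ∃ x ∈ X, G.Adj c x := by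
  obtain ⟨x, hx⟩ := hX
  obtain ⟨d, -, hd₁, hd₂⟩ := (hG.preconnected v x).some.exists_boundary_dart
    {w | AvoidReach G X v w} (.refl hv) fun h => h.notMem_right hx
  refine ⟨d.fst, hd₁, d.snd, ?_, d.adj⟩
  by_contra h
  exact hd₂ (AvoidReach.adj hd₁ d.adj h)

/-- Each component of `G - X` contains a neighbour of `X`, unless `X = ∅`. -/
lemma finite_setOf_isCompOf (hG : G.Connected) (hlf : ∀ v : V, (G.neighborSet v).Finite)
    (hX : X.Finite) : {C | IsCompOf G X C}.Finite := by
  obtain ⟨v₀⟩ := hG.nonempty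
  refine (((hX.biUnion fun x _ => hlf x).insert v₀).image
    fun u => {w | AvoidReach G X u w}).subset ?_
  rintro C ⟨v, hv, rfl⟩
  rcases X.eq_empty_or_nonempty with rfl | hXne
  · refine ⟨v₀, Set.mem_insert _ _, ((isCompOf_setOf hv).eq_setOf ?_).symm⟩
    exact ⟨(hG.preconnected v v₀).some, fun _ _ => id⟩
  · obtain ⟨c, hc, x, hx, hcx⟩ := exists_adj_of_avoidReach hG hv hXne
    exact ⟨c, Set.mem_insert_of_mem _ (Set.mem_biUnion hx hcx.symm),
      ((isCompOf_setOf hv).eq_setOf hc).symm⟩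

end AvoidReach

section Sides

variable {s t : GraphSep G} {X : Set V} {a b : V}

lemma sepSet_inv (t : GraphSep G) : t.inv.sepSet = t.sepSet := Set.inter_comm _ _

lemma mem_sideA_or_sideB (hv : a ∉ t.sepSet) : a ∈ t.A \ t.B ∨ a ∈ t.B \ t.A := by
  rcases t.mem_A_or_B a with h | h
  exacts [.inl ⟨h, fun h' => hv ⟨h, h'⟩⟩, .inr ⟨h, fun h' => hv ⟨h', h⟩⟩]

lemma support_subset_sideA_of_walk : ∀ {a b : V} (p : G.Walk a b),
    (∀ u ∈ p.support, u ∉ t.sepSet) → a ∈ t.A \ t.B → ∀ u ∈ p.support, u ∈ t.A \ t.B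
  | _, _, .nil, _, ha, u, hu => by
    obtain rfl := List.mem_singleton.mp hu
    exact ha
  | a, _, .cons hac p, hp, ha, u, hu => by
    rw [SimpleGraph.Walk.support_cons, List.mem_cons] at hu
    rcases hu with rfl | hu
    · exact ha
    have hc : _ ∈ t.A \ t.B := (mem_sideA_or_sideB (hp _ (by simp))).resolve_right
      fun hc => t.no_edge a ha _ hc hac
    exact support_subset_sideA_of_walk p (fun v hv => hp v (by simp [hv])) hc u hu

lemma AvoidReach.mem_sideA (ha : a ∈ t.A \ t.B) (h : AvoidReach G t.sepSet a b) :
    b ∈ t.A \ t.B := by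
  obtain ⟨p, hp⟩ := h
  exact support_subset_sideA_of_walk p hp ha b p.end_mem_support

lemma AvoidReach.of_sideA (ha : a ∈ t.A \ t.B) (h : AvoidReach G t.sepSet a b)
    (hX : Disjoint X (t.A \ t.B)) : AvoidReach G X a b := by
  obtain ⟨p, hp⟩ := h
  exact ⟨p, fun u hu huX =>
    hX.notMem_of_mem_left huX (support_subset_sideA_of_walk p hp ha u hu)⟩

lemma sepSet_nonempty_of_connected (hG : G.Connected) (ha : a ∈ t.A \ t.B)
    (hb : b ∈ t.B \ t.A) : t.sepSet.Nonempty := by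
  by_contra h
  rw [Set.not_nonempty_iff_eq_empty] at h
  have hab : AvoidReach G t.sepSet a b := ⟨(hG.preconnected a b).some, by simp [h]⟩
  exact (hab.mem_sideA ha).2 hb.1

lemma le_of_A_subset_sideA (h : t.A ⊆ s.A \ s.B) : t.le s := by
  refine ⟨fun x hx => (h hx).1, fun x hx => ?_⟩
  exact (t.mem_A_or_B x).resolve_left fun hxA => (h hxA).2 hx

lemma A_eq_sepSet_union (t : GraphSep G) :
    t.A = t.sepSet ∪ ⋃₀ {C | IsCompOf G t.sepSet C ∧ C ⊆ t.A} := by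
  refine subset_antisymm (fun a ha => ?_) (Set.union_subset Set.inter_subset_left
    (Set.sUnion_subset fun C hC => hC.2))
  by_cases haB : a ∈ t.B
  · exact .inl ⟨ha, haB⟩
  have haY : a ∉ t.sepSet := fun h => haB h.2
  exact .inr ⟨_, ⟨isCompOf_setOf haY, fun b hb => (AvoidReach.mem_sideA ⟨ha, haB⟩ hb).1⟩,
    .refl haY⟩

lemma B_eq_compl_union_sepSet (t : GraphSep G) : t.B = t.Aᶜ ∪ t.sepSet := by
  ext b
  by_cases hb : b ∈ t.A
  · simp [sepSet, hb]
  · simp [sepSet, hb, (t.mem_A_or_B b).resolve_left hb]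

lemma eq_of_sepSet_eq_of_A_eq {t₁ t₂ : GraphSep G} (hY : t₁.sepSet = t₂.sepSet)
    (hA : t₁.A = t₂.A) : t₁ = t₂ := by
  have hB : t₁.B = t₂.B := by rw [B_eq_compl_union_sepSet, t₂.B_eq_compl_union_sepSet, hA, hY]
  cases t₁; cases t₂
  cases hA; cases hB
  rfl

lemma finite_setOf_sepSet_eq (hG : G.Connected) (hlf : ∀ v : V, (G.neighborSet v).Finite)
    {Y : Set V} (hY : Y.Finite) : {t : GraphSep G | t.sepSet = Y}.Finite := by
  refine Set.Finite.of_finite_image (f := GraphSep.A) ?_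
    fun t₁ h₁ t₂ h₂ hA => eq_of_sepSet_eq_of_A_eq (h₁.trans h₂.symm) hA
  refine ((finite_setOf_isCompOf hG hlf hY).finite_subsets.image
    fun 𝒞 => Y ∪ ⋃₀ 𝒞).subset ?_
  rintro _ ⟨t, rfl, rfl⟩
  exact ⟨_, fun C hC => hC.1, t.A_eq_sepSet_union.symm⟩

end Sides

section Tight

variable {s t : GraphSep G}

lemma Nested.of_inv (h : Nested t.inv s) : Nested t s := by
  unfold Nested at h ⊢
  tauto

lemma IsTight.inv (ht : IsTight t) : IsTight t.inv := by
  unfold IsTight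
  rw [sepSet_inv]
  exact ⟨ht.2, ht.1⟩

lemma IsTight.sepSet_nonempty (hG : G.Connected) (ht : IsTight t) : t.sepSet.Nonempty := by
  obtain ⟨⟨C, hC, -, hCA⟩, ⟨D, hD, -, hDB⟩⟩ := ht
  obtain ⟨a, ha⟩ := hC.nonempty
  obtain ⟨b, hb⟩ := hD.nonempty
  exact sepSet_nonempty_of_connected hG (hCA ha) (hDB hb)

lemma IsTight.nested_of_disjoint (hG : G.Connected) (ht : IsTight t)
    (hX : Disjoint s.sepSet t.A) : Nested t s := by
  obtain ⟨C, hC, hCn, hCA⟩ := ht.1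
  obtain ⟨v, hv⟩ := hC.nonempty
  have hXA : Disjoint s.sepSet (t.A \ t.B) := hX.mono_right Set.sdiff_subset
  have hsep : ∀ y ∈ t.sepSet, AvoidReach G s.sepSet v y := by
    intro y hy
    obtain ⟨-, c, hc, hyc⟩ : y ∈ nbhd G C := hCn ▸ hy
    exact ((hC.avoidReach hv hc).of_sideA (hCA hv) hXA).adj hyc.symm
      (hX.notMem_of_mem_right hy.1)
  have hreach : ∀ a ∈ t.A, AvoidReach G s.sepSet v a := by
    intro a ha
    by_cases haB : a ∈ t.B
    · exact hsep a ⟨ha, haB⟩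
    obtain ⟨c, hc, y, hy, hcy⟩ :=
      exists_adj_of_avoidReach hG (fun h => haB h.2) (ht.sepSet_nonempty hG)
    exact (hsep y hy).trans
      ((hc.of_sideA ⟨ha, haB⟩ hXA).adj hcy (hX.notMem_of_mem_right hy.1)).symm
  rcases mem_sideA_or_sideB (hXA.notMem_of_mem_right (hCA hv)) with hvs | hvs
  · exact .inl (le_of_A_subset_sideA fun a ha => (hreach a ha).mem_sideA hvs)
  · exact .inr (.inl (le_of_A_subset_sideA (s := s.inv) fun a ha =>
      ((hreach a ha).mono (sepSet_inv s).le).mem_sideA hvs))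

lemma IsTight.exists_forall_walk_meets (hG : G.Connected) (ht : IsTight t)
    (hts : ¬ Nested t s) : ∃ x ∈ s.sepSet, ∃ x' ∈ s.sepSet,
      ∀ p : G.Walk x x', ∃ u ∈ p.support, u ∈ t.sepSet := by
  by_cases hXY : ∃ x ∈ s.sepSet, x ∈ t.sepSet
  · obtain ⟨x, hx, hxt⟩ := hXY
    exact ⟨x, hx, x, hx, fun p => ⟨x, p.start_mem_support, hxt⟩⟩
  push Not at hXY
  obtain ⟨x, hx, hxA⟩ := Set.not_disjoint_iff.mp fun h => hts (ht.nested_of_disjoint hG h)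
  obtain ⟨x', hx', hx'B⟩ :=
    Set.not_disjoint_iff.mp fun h => hts (ht.inv.nested_of_disjoint hG h).of_inv
  refine ⟨x, hx, x', hx', fun p => ?_⟩
  by_contra! hp
  exact (AvoidReach.mem_sideA ⟨hxA, fun h => hXY x hx ⟨hxA, h⟩⟩ ⟨p, hp⟩).2 hx'B

def TightBetween (G : SimpleGraph V) (Y : Set V) (x x' : V) : Prop :=
  ∃ C C', IsCompOf G Y C ∧ nbhd G C = Y ∧ IsCompOf G Y C' ∧ nbhd G C' = Y ∧
    Disjoint C C' ∧ x ∈ C ∧ x' ∈ C'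

/-- The separators of tight separations. -/
def IsTightSeparator (G : SimpleGraph V) (Y : Set V) : Prop :=
  ∃ x x', TightBetween G Y x x'

lemma IsTight.isTightSeparator (ht : IsTight t) : IsTightSeparator G t.sepSet := by
  obtain ⟨⟨C, hC, hCn, hCA⟩, ⟨D, hD, hDn, hDB⟩⟩ := ht
  obtain ⟨x, hx⟩ := hC.nonempty
  obtain ⟨y, hy⟩ := hD.nonempty
  exact ⟨x, y, C, D, hC, hCn, hD, hDn,
    Set.disjoint_left.mpr fun u hu hu' => (hDB hu').2 (hCA hu).1, hx, hy⟩

end Tight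

section TightSeparator

variable {F Y : Set V} {f x x' y : V}

lemma TightBetween.exists_mem_support (h : TightBetween G Y x x') (p : G.Walk x x') :
    ∃ u ∈ p.support, u ∈ Y := by
  obtain ⟨C, C', hC, -, -, -, hCC', hx, hx'⟩ := h
  by_contra! hp
  exact Set.disjoint_left.mp hCC' (hC.mem_of_avoidReach hx ⟨p, hp⟩) hx'

lemma IsCompOf.avoidReach_of_mem_nbhd {C : Set V} (hC : IsCompOf G Y C) (hx : x ∈ C)
    (hy : y ∈ nbhd G C) (hFY : F ⊆ Y) (hyF : y ∉ F) : AvoidReach G F x y := by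
  obtain ⟨-, c, hc, hyc⟩ := hy
  exact ((hC.avoidReach hx hc).mono hFY).adj hyc.symm hyF

lemma TightBetween.subset_of_not_avoidReach (h : TightBetween G Y x x') (hFY : F ⊆ Y)
    (hF : ¬ AvoidReach G F x x') : Y ⊆ F := by
  obtain ⟨C, C', hC, hCn, hC', hC'n, -, hx, hx'⟩ := h
  intro y hy
  by_contra hyF
  exact hF ((hC.avoidReach_of_mem_nbhd hx (hCn ▸ hy) hFY hyF).trans
    (hC'.avoidReach_of_mem_nbhd hx' (hC'n ▸ hy) hFY hyF).symm)

lemma IsTightSeparator.exists_tightBetween_adj (h : IsTightSeparator G Y) (hf : f ∈ Y) :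
    ∃ x ∈ G.neighborSet f, ∃ x' ∈ G.neighborSet f, TightBetween G Y x x' := by
  obtain ⟨-, -, C, C', hC, hCn, hC', hC'n, hCC', -, -⟩ := h
  obtain ⟨-, x, hx, hfx⟩ : f ∈ nbhd G C := hCn ▸ hf
  obtain ⟨-, x', hx', hfx'⟩ : f ∈ nbhd G C' := hC'n ▸ hf
  exact ⟨x, hfx, x', hfx', C, C', hC, hCn, hC', hC'n, hCC', hx, hx'⟩

lemma finite_isTightSeparator_of_subset (hlf : ∀ v : V, (G.neighborSet v).Finite) (n : ℕ) :
    ∀ (m : ℕ) {F : Set V}, F.Finite → F.Nonempty → (n : ℕ∞) ≤ F.encard + m →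
      {Y | IsTightSeparator G Y ∧ Y.encard ≤ n ∧ F ⊆ Y}.Finite
  | 0, F, hF, _, hn => (Set.finite_singleton F).subset fun Y ⟨_, hYn, hFY⟩ =>
      (hF.eq_of_subset_of_encard_le hFY (hYn.trans (by simpa using hn))).symm
  | m + 1, F, hF, ⟨f, hf⟩, hn => by
    have hfibre :
        ∀ x x', {Y : Set V | Y.encard ≤ n ∧ F ⊆ Y ∧ TightBetween G Y x x'}.Finite := by
      intro x x'
      by_cases hxx' : AvoidReach G F x x'
      · obtain ⟨p, hp⟩ := hxx'
        refine (p.support.finite_toSet.biUnion fun u hu =>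
          finite_isTightSeparator_of_subset hlf n m (hF.insert u) (Set.insert_nonempty u F)
            ?_).subset ?_
        · rw [Set.encard_insert_of_notMem (hp u hu)]
          calc (n : ℕ∞) ≤ F.encard + (m + 1 : ℕ) := hn
            _ = F.encard + 1 + m := by push_cast; ring
        · rintro Y ⟨hYn, hFY, hY⟩
          obtain ⟨u, hu, huY⟩ := hY.exists_mem_support p
          exact Set.mem_biUnion hu ⟨⟨x, x', hY⟩, hYn, Set.insert_subset huY hFY⟩
      · exact (Set.finite_singleton F).subset fun Y ⟨_, hFY, hY⟩ =>
          (hY.subset_of_not_avoidReach hFY hxx').antisymm hFY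
    refine ((hlf f).biUnion fun x _ => (hlf f).biUnion fun x' _ => hfibre x x').subset ?_
    rintro Y ⟨hY, hYn, hFY⟩
    obtain ⟨x, hx, x', hx', hxx'⟩ := hY.exists_tightBetween_adj (hFY hf)
    exact Set.mem_biUnion hx (Set.mem_biUnion hx' ⟨hYn, hFY, hxx'⟩)

lemma finite_isTightSeparator_of_mem (hlf : ∀ v : V, (G.neighborSet v).Finite) (n : ℕ)
    (v : V) : {Y | IsTightSeparator G Y ∧ Y.encard ≤ n ∧ v ∈ Y}.Finite := by
  simpa using finite_isTightSeparator_of_subset hlf n n (Set.finite_singleton v)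
    (Set.singleton_nonempty v) (by simp)

end TightSeparator

end GraphSep

open GraphSep in
theorem stmt16_general {V : Type} (G : SimpleGraph V) (hG : G.Connected)
    (hlf : ∀ v : V, (G.neighborSet v).Finite)
    (s : GraphSep G) (hfin : s.order < ⊤) :
    {t : GraphSep G | IsTight t ∧ t.order ≤ s.order ∧ ¬ Nested t s}.Finite := by
  obtain ⟨n, hn⟩ := ENat.ne_top_iff_exists.mp hfin.ne
  have hX : s.sepSet.Finite := Set.encard_lt_top_iff.mp hfin
  set W := ⋃ x ∈ s.sepSet, ⋃ x' ∈ s.sepSet, {u | u ∈ (hG.preconnected x x').some.support}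
  have hW : W.Finite := hX.biUnion fun x _ => hX.biUnion fun x' _ => List.finite_toSet _
  have hseps : (⋃ w ∈ W, {Y | IsTightSeparator G Y ∧ Y.encard ≤ n ∧ w ∈ Y}).Finite :=
    hW.biUnion fun w _ => finite_isTightSeparator_of_mem hlf n w
  refine (hseps.preimage' fun Y hY => finite_setOf_sepSet_eq hG hlf ?_).subset ?_
  · obtain ⟨-, -, -, hYn, -⟩ := Set.mem_iUnion₂.mp hY
    exact Set.finite_of_encard_le_coe hYn
  rintro t ⟨ht, hts, hnest⟩
  obtain ⟨x, hx, x', hx', hmeet⟩ := ht.exists_forall_walk_meets hG hnest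
  obtain ⟨u, hu, huY⟩ := hmeet (hG.preconnected x x').some
  exact Set.mem_biUnion (Set.mem_biUnion hx (Set.mem_biUnion hx' hu))
    ⟨ht.isTightSeparator, hn ▸ hts, huY⟩

open GraphSep in
/-- in a locally finite connected graph, a separation efficiently
distinguishing two regular profiles crosses only finitely many tight separations of
at most its order. -/
theorem stmt16 {V : Type} (G : SimpleGraph V) (hG : G.Connected)
    (hlf : ∀ v : V, (G.neighborSet v).Finite)
    (s : GraphSep G) (hfin : s.order < ⊤)
    (heff : ∃ P P' : Set (GraphSep G), IsProfileIn G P ∧ IsProfileIn G P' ∧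
      RegularP P ∧ RegularP P' ∧ EffDist s P P') :
    {t : GraphSep G | IsTight t ∧ t.order ≤ s.order ∧ ¬ Nested t s}.Finite :=
  stmt16_general G hG hlf s hfin
end
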